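/- arXiv:1303.5279 — 5 statements merged into one kernel-verified Lean document; each statement's English description precedes it below -/
import Mathlib

section
/- For integers r < s and any integers x1, x2, and parameter a with 0 < a < 1, the linear combination a·ψ_{2r,2s+1}(x1,x2) + ψ_{2r,2s+1}(x1,x2+1) − ψ_{2r,2s+3}(x1,x2+1) + a·ψ_{2r,2s+3}(x1,x2+2) equals 0, where ψ_{2r+ε1,2s+ε2}(x,y) = (1/(2πi)) ∮_{Γ} z^{x−y} (1+az)^{s−r} / (1 − a/z)^{s−r+ε2−ε1} dz/z, the contour Γ being a positively oriented circle enclosing 0 and a but not −1/a. -/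
open Complex

/-- The kernel `ψ_{2r+ε1,2s+ε2}(x,y)`, given by a contour integral over a positively
oriented circle of radius `R` around the origin (which encloses `0` and `a` but not `-1/a`
when `a < R < 1/a`). -/
noncomputable def psiAztec (a R : ℝ) (r s x y ε₁ ε₂ : ℤ) : ℂ :=
  (2 * Real.pi * I)⁻¹ * ∮ z in C(0, R),
    z ^ (x - y) * (1 + (a : ℂ) * z) ^ (s - r) * (1 - (a : ℂ) / z) ^ (-(s - r + ε₂ - ε₁)) / z

lemma circleIntegral_add' {f g : ℂ → ℂ} {c : ℂ} {R : ℝ} (hf : CircleIntegrable f c R)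
    (hg : CircleIntegrable g c R) :
    (∮ z in C(c, R), (f z + g z)) = (∮ z in C(c, R), f z) + ∮ z in C(c, R), g z := by
  simp only [circleIntegral, smul_add, intervalIntegral.integral_add hf.out hg.out]

lemma key_pointwise (a : ℝ) (x1 x2 m : ℤ) (z : ℂ) (hz : z ≠ 0)
    (hw : (1 : ℂ) - a / z ≠ 0) (hu : (1 : ℂ) + a * z ≠ 0) :
    (a : ℂ) * (z ^ (x1 - x2) * (1 + (a : ℂ) * z) ^ m * (1 - (a : ℂ) / z) ^ (-(m + 1)) / z)
      + z ^ (x1 - (x2 + 1)) * (1 + (a : ℂ) * z) ^ m * (1 - (a : ℂ) / z) ^ (-(m + 1)) / z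
      - z ^ (x1 - (x2 + 1)) * (1 + (a : ℂ) * z) ^ (m + 1) * (1 - (a : ℂ) / z) ^ (-(m + 2)) / z
      + (a : ℂ) * (z ^ (x1 - (x2 + 2)) * (1 + (a : ℂ) * z) ^ (m + 1) *
          (1 - (a : ℂ) / z) ^ (-(m + 2)) / z) = 0 := by
  have h1 : x1 - x2 = (x1 - (x2 + 2)) + 2 := by ring
  have h2 : x1 - (x2 + 1) = (x1 - (x2 + 2)) + 1 := by ring
  have h3 : -(m + 1) = (-(m + 2)) + 1 := by ring
  rw [h1, h2, h3, zpow_add₀ hz, zpow_add₀ hz, zpow_add₀ hw, zpow_add_one₀ hu,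
    zpow_one, zpow_one]
  generalize z ^ (x1 - (x2 + 2)) = P
  generalize (1 + (a:ℂ) * z) ^ m = Q
  generalize (1 - (a:ℂ) / z) ^ (-(m + 2)) = W
  simp only [zpow_ofNat]
  field_simp
  ring


/-- For `r < s` and `0 < a < 1`,
`a·ψ_{2r,2s+1}(x1,x2) + ψ_{2r,2s+1}(x1,x2+1) − ψ_{2r,2s+3}(x1,x2+1) + a·ψ_{2r,2s+3}(x1,x2+2) = 0`. -/
theorem stmt0 (a R : ℝ) (ha0 : 0 < a) (ha1 : a < 1) (hR1 : a < R) (hR2 : R < 1 / a)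
    (r s x1 x2 : ℤ) (hrs : r < s) :
    (a : ℂ) * psiAztec a R r s x1 x2 0 1
      + psiAztec a R r s x1 (x2 + 1) 0 1
      - psiAztec a R r (s + 1) x1 (x2 + 1) 0 1
      + (a : ℂ) * psiAztec a R r (s + 1) x1 (x2 + 2) 0 1 = 0 := by
  have hR0 : 0 < R := ha0.trans hR1
  have haR : a * R < 1 := by
    have := (lt_div_iff₀ ha0).mp hR2
    linarith
  -- facts about points on the sphere
  have hsph : ∀ z ∈ Metric.sphere (0 : ℂ) R,
      z ≠ 0 ∧ ((1 : ℂ) - a / z ≠ 0) ∧ ((1 : ℂ) + a * z ≠ 0) := by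
    intro z hz
    rw [mem_sphere_zero_iff_norm] at hz
    have hz0 : z ≠ 0 := by
      intro h; rw [h, norm_zero] at hz; exact hR0.ne hz
    refine ⟨hz0, ?_, ?_⟩
    · intro h
      have hza : (a : ℂ) = z := by
        field_simp at h
        linear_combination -h
      have : ‖(a : ℂ)‖ = R := by rw [hza, hz]
      simp [Complex.norm_real, Real.norm_eq_abs, abs_of_pos ha0] at this
      exact absurd this hR1.ne
    · intro h
      have h1 : (a : ℂ) * z = -1 := by linear_combination h
      have : ‖(a : ℂ) * z‖ = 1 := by rw [h1]; simp
      rw [norm_mul, hz] at this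
      simp [Complex.norm_real, Real.norm_eq_abs, abs_of_pos ha0] at this
      exact absurd this haR.ne
  -- continuity of the integrands on the sphere
  have hcont : ∀ (k n p : ℤ), ContinuousOn
      (fun z : ℂ => z ^ k * (1 + (a : ℂ) * z) ^ n * (1 - (a : ℂ) / z) ^ p / z)
      (Metric.sphere (0 : ℂ) R) := by
    intro k n p z hz
    obtain ⟨hz0, hw, hu⟩ := hsph z hz
    apply ContinuousAt.continuousWithinAt
    have c1 : ContinuousAt (fun z : ℂ => z ^ k) z := continuousAt_zpow₀ z k (Or.inl hz0)
    have c2 : ContinuousAt (fun z : ℂ => (1 + (a : ℂ) * z) ^ n) z :=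
      ContinuousAt.zpow₀ (by fun_prop) n (Or.inl hu)
    have c3 : ContinuousAt (fun z : ℂ => (1 - (a : ℂ) / z) ^ p) z :=
      ContinuousAt.zpow₀ (continuousAt_const.sub (continuousAt_const.div continuousAt_id hz0))
        p (Or.inl hw)
    exact ((c1.mul c2).mul c3).div continuousAt_id hz0
  have hci : ∀ (k n p : ℤ), CircleIntegrable
      (fun z : ℂ => z ^ k * (1 + (a : ℂ) * z) ^ n * (1 - (a : ℂ) / z) ^ p / z) 0 R :=
    fun k n p => (hcont k n p).circleIntegrable hR0.le
  simp only [psiAztec]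
  rw [show (s - r + 1 - 0 : ℤ) = s - r + 1 from by ring,
      show (s + 1 - r + 1 - 0 : ℤ) = s - r + 2 from by ring,
      show (s + 1 - r : ℤ) = s - r + 1 from by ring]
  set F1 : ℂ → ℂ := fun z => z ^ (x1 - x2) * (1 + (a : ℂ) * z) ^ (s - r) *
      (1 - (a : ℂ) / z) ^ (-(s - r + 1)) / z with hF1
  set F2 : ℂ → ℂ := fun z => z ^ (x1 - (x2 + 1)) * (1 + (a : ℂ) * z) ^ (s - r) *
      (1 - (a : ℂ) / z) ^ (-(s - r + 1)) / z with hF2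
  set F3 : ℂ → ℂ := fun z => z ^ (x1 - (x2 + 1)) * (1 + (a : ℂ) * z) ^ (s - r + 1) *
      (1 - (a : ℂ) / z) ^ (-(s - r + 2)) / z with hF3
  set F4 : ℂ → ℂ := fun z => z ^ (x1 - (x2 + 2)) * (1 + (a : ℂ) * z) ^ (s - r + 1) *
      (1 - (a : ℂ) / z) ^ (-(s - r + 2)) / z with hF4
  have hc1 := hcont (x1 - x2) (s - r) (-(s - r + 1))
  have hc2 := hcont (x1 - (x2 + 1)) (s - r) (-(s - r + 1))
  have hc3 := hcont (x1 - (x2 + 1)) (s - r + 1) (-(s - r + 2))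
  have hc4 := hcont (x1 - (x2 + 2)) (s - r + 1) (-(s - r + 2))
  -- the combined integrand vanishes on the sphere
  have hkey : Set.EqOn (fun z => (a : ℂ) * F1 z + F2 z - F3 z + (a : ℂ) * F4 z)
      (fun _ => (0 : ℂ)) (Metric.sphere (0 : ℂ) R) := by
    intro z hz
    obtain ⟨hz0, hw, hu⟩ := hsph z hz
    exact key_pointwise a x1 x2 (s - r) z hz0 hw hu
  have hzero : (∮ z in C(0, R), ((a : ℂ) * F1 z + F2 z - F3 z + (a : ℂ) * F4 z)) = 0 := by
    rw [circleIntegral.integral_congr hR0.le hkey]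
    simp [circleIntegral]
  -- split the integral
  have hI1 : CircleIntegrable (fun z => (a : ℂ) * F1 z) 0 R :=
    (continuousOn_const.mul hc1).circleIntegrable hR0.le
  have hI4 : CircleIntegrable (fun z => (a : ℂ) * F4 z) 0 R :=
    (continuousOn_const.mul hc4).circleIntegrable hR0.le
  have hI12 : CircleIntegrable (fun z => (a : ℂ) * F1 z + F2 z) 0 R :=
    ((continuousOn_const.mul hc1).add hc2).circleIntegrable hR0.le
  have hI123 : CircleIntegrable (fun z => (a : ℂ) * F1 z + F2 z - F3 z) 0 R :=
    (((continuousOn_const.mul hc1).add hc2).sub hc3).circleIntegrable hR0.le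
  have hs1 : (∮ z in C(0, R), (a : ℂ) * F1 z) = (a : ℂ) * ∮ z in C(0, R), F1 z := by
    simpa [smul_eq_mul] using circleIntegral.integral_smul (a : ℂ) F1 0 R
  have hs4 : (∮ z in C(0, R), (a : ℂ) * F4 z) = (a : ℂ) * ∮ z in C(0, R), F4 z := by
    simpa [smul_eq_mul] using circleIntegral.integral_smul (a : ℂ) F4 0 R
  have hsplit : (a : ℂ) * (∮ z in C(0, R), F1 z) + (∮ z in C(0, R), F2 z)
      - (∮ z in C(0, R), F3 z) + (a : ℂ) * (∮ z in C(0, R), F4 z) = 0 := by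
    have e1 : (∮ z in C(0, R), ((a : ℂ) * F1 z + F2 z - F3 z + (a : ℂ) * F4 z))
        = (∮ z in C(0, R), ((a : ℂ) * F1 z + F2 z - F3 z))
          + ∮ z in C(0, R), (a : ℂ) * F4 z :=
      circleIntegral_add' hI123 hI4
    have e2 : (∮ z in C(0, R), ((a : ℂ) * F1 z + F2 z - F3 z))
        = (∮ z in C(0, R), ((a : ℂ) * F1 z + F2 z)) - ∮ z in C(0, R), F3 z :=
      circleIntegral.integral_sub hI12 (hci _ _ _)
    have e3 : (∮ z in C(0, R), ((a : ℂ) * F1 z + F2 z))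
        = (∮ z in C(0, R), (a : ℂ) * F1 z) + ∮ z in C(0, R), F2 z :=
      circleIntegral_add' hI1 (hci _ _ _)
    rw [← hs1, ← hs4, ← e3, ← e2, ← e1]
    exact hzero
  linear_combination ((2 * (Real.pi : ℂ) * I)⁻¹) * hsplit
end

section
/- Fix A > 0, β ∈ ℝ, k ≥ 1 and let a = 1 − β/√t. Define F_{x,t}(ζ) = (a^{−1} − ζ/√t)^{t + x√t}(a + ζ/√t)^{t − x√t}. Then there exists t_0 such that for all t ≥ t_0, all x ∈ [−A, A], and all s ∈ ℝ, one has 1/|F_{x,t}(β + is)| ≤ 1/(1 + s^{2k}/(2^k k!)). -/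
open Complex

lemma aux_binom (y : ℝ) (hy : 0 ≤ y) (n k : ℕ) (hk1 : 1 ≤ k) (hk : k ≤ n) :
    1 + (n.choose k : ℝ) * y ^ k ≤ (1 + y) ^ n := by
  have h1 : (1 + y) ^ n = ∑ i ∈ Finset.range (n + 1), y ^ i * (n.choose i : ℝ) := by
    rw [add_comm, add_pow]
    simp
  rw [h1]
  have hsub : ({0, k} : Finset ℕ) ⊆ Finset.range (n + 1) := by
    intro i hi
    simp only [Finset.mem_insert, Finset.mem_singleton] at hi
    rcases hi with h | h <;> simp [h] <;> omega
  calc 1 + (n.choose k : ℝ) * y ^ k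
      = ∑ i ∈ ({0, k} : Finset ℕ), y ^ i * (n.choose i : ℝ) := by
        rw [Finset.sum_pair (by omega : (0 : ℕ) ≠ k)]
        simp [mul_comm]
    _ ≤ _ := Finset.sum_le_sum_of_subset_of_nonneg hsub (by
        intro i _ _
        positivity)

lemma aux_desc (n k : ℕ) (h : 2 * k ≤ n) :
    ((n : ℝ) / 2) ^ k ≤ (n.descFactorial k : ℝ) := by
  rw [Nat.descFactorial_eq_prod_range, Nat.cast_prod]
  calc ((n : ℝ) / 2) ^ k = ∏ _i ∈ Finset.range k, (n : ℝ) / 2 := by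
        rw [Finset.prod_const, Finset.card_range]
    _ ≤ _ := ?_
  apply Finset.prod_le_prod
  · intros; positivity
  · intro i hi
    simp only [Finset.mem_range] at hi
    have h1 : ((n - i : ℕ) : ℝ) = (n : ℝ) - i := by
      rw [Nat.cast_sub (by omega)]
    rw [h1]
    have h2 : (i : ℝ) + 1 ≤ (k : ℝ) := by exact_mod_cast hi
    have h3 : 2 * (k : ℝ) ≤ (n : ℝ) := by exact_mod_cast h
    linarith

lemma abs_re_add_im (x y : ℝ) :
    ‖(x : ℂ) + (y : ℝ) * I‖ = Real.sqrt (x ^ 2 + y ^ 2) := by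
  rw [Complex.norm_def]
  congr 1
  simp [Complex.normSq_apply]
  ring

/-- Fix `A > 0`, `β ∈ ℝ`, `k ≥ 1`, and let `a = 1 − β/√t`,
`F_{x,t}(ζ) = (a⁻¹ − ζ/√t)^{t+x√t} (a + ζ/√t)^{t−x√t}` (moduli with real exponents).
There is `t₀` such that for all integers `t ≥ t₀`, all `x ∈ [−A,A]` and all `s ∈ ℝ`,
`1/|F_{x,t}(β+is)| ≤ 1/(1 + s^{2k}/(2^k k!))`. -/
theorem stmt5 (A β : ℝ) (hA : 0 < A) (k : ℕ) (hk : 1 ≤ k) :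
    ∃ t0 : ℕ, ∀ t : ℕ, t0 ≤ t → ∀ x ∈ Set.Icc (-A) A, ∀ s : ℝ,
      1 / ((‖(((1 - β / Real.sqrt t)⁻¹ : ℝ) : ℂ)
              - ((β : ℂ) + s * I) / (Real.sqrt t : ℂ)‖) ^ ((t : ℝ) + x * Real.sqrt t)
          * (‖((1 - β / Real.sqrt t : ℝ) : ℂ)
              + ((β : ℂ) + s * I) / (Real.sqrt t : ℂ)‖) ^ ((t : ℝ) - x * Real.sqrt t))
        ≤ 1 / (1 + s ^ (2 * k) / (2 ^ k * (Nat.factorial k : ℝ))) := by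
  refine ⟨2 * k + ⌈β ^ 2⌉₊ + ⌈A ^ 2⌉₊ + 1, ?_⟩
  intro t ht x hx s
  have ht1 : 1 ≤ t := by omega
  have htR : (1 : ℝ) ≤ (t : ℝ) := by exact_mod_cast ht1
  have htR0 : (0 : ℝ) < (t : ℝ) := by linarith
  set r := Real.sqrt t with hrdef
  have hr0 : 0 < r := Real.sqrt_pos.2 htR0
  have hrt : r ^ 2 = (t : ℝ) := Real.sq_sqrt htR0.le
  -- β < r
  have hβ2 : β ^ 2 < (t : ℝ) := by
    have h1 : β ^ 2 ≤ (⌈β ^ 2⌉₊ : ℝ) := Nat.le_ceil _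
    have h2 : (⌈β ^ 2⌉₊ : ℝ) + 1 ≤ (t : ℝ) := by exact_mod_cast (by omega : ⌈β ^ 2⌉₊ + 1 ≤ t)
    linarith
  have hβr : β < r := by
    rcases le_or_gt β 0 with h | h
    · linarith
    · calc β = Real.sqrt (β ^ 2) := (Real.sqrt_sq h.le).symm
        _ < r := Real.sqrt_lt_sqrt (sq_nonneg β) hβ2
  have hA2 : A ^ 2 ≤ (t : ℝ) := by
    have h1 : A ^ 2 ≤ (⌈A ^ 2⌉₊ : ℝ) := Nat.le_ceil _
    have h2 : (⌈A ^ 2⌉₊ : ℝ) ≤ (t : ℝ) := by exact_mod_cast (by omega : ⌈A ^ 2⌉₊ ≤ t)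
    linarith
  have hAr : A ≤ r := by
    calc A = Real.sqrt (A ^ 2) := (Real.sqrt_sq hA.le).symm
      _ ≤ r := Real.sqrt_le_sqrt hA2
  set a : ℝ := 1 - β / r with hadef
  have ha : 0 < a := by
    have : β / r < 1 := (div_lt_one hr0).2 hβr
    simp only [hadef]; linarith
  -- exponents nonneg
  have hp : 0 ≤ (t : ℝ) + x * r := by
    have h1 : -A ≤ x := hx.1
    nlinarith [mul_le_mul_of_nonneg_right h1 hr0.le, mul_le_mul_of_nonneg_right hAr hr0.le]
  have hq : 0 ≤ (t : ℝ) - x * r := by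
    have h1 : x ≤ A := hx.2
    nlinarith [mul_le_mul_of_nonneg_right h1 hr0.le, mul_le_mul_of_nonneg_right hAr hr0.le]
  set u : ℝ := 1 + s ^ 2 / t with hudef
  have hu1 : 1 ≤ u := by
    have : 0 ≤ s ^ 2 / t := by positivity
    simp only [hudef]; linarith
  have hu0 : 0 < u := by linarith
  have hsu1 : 1 ≤ Real.sqrt u := by
    rw [show (1 : ℝ) = Real.sqrt 1 by simp]
    exact Real.sqrt_le_sqrt hu1
  have hrC : ((r : ℝ) : ℂ) ≠ 0 := by exact_mod_cast hr0.ne'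
  have hsr2 : (s / r) ^ 2 = s ^ 2 / t := by
    rw [div_pow, hrt]
  -- second factor modulus
  have key2 : ((1 - β / r : ℝ) : ℂ) + ((β : ℂ) + s * I) / ((r : ℝ) : ℂ)
      = ((1 : ℝ) : ℂ) + ((s / r : ℝ) : ℂ) * I := by
    push_cast
    field_simp
    ring
  have hM2 : ‖((1 - β / r : ℝ) : ℂ) + ((β : ℂ) + s * I) / ((r : ℝ) : ℂ)‖
      = Real.sqrt u := by
    rw [key2, abs_re_add_im, hsr2]
    simp [hudef]
  -- first factor modulus
  have key1 : (((1 - β / r)⁻¹ : ℝ) : ℂ) - ((β : ℂ) + s * I) / ((r : ℝ) : ℂ)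
      = (((1 - β / r)⁻¹ - β / r : ℝ) : ℂ) + ((-(s / r) : ℝ) : ℂ) * I := by
    push_cast
    ring
  have hinv : 1 ≤ a⁻¹ - β / r := by
    have h1 : β / r = 1 - a := by simp [hadef]
    have h2 : a * a⁻¹ = 1 := mul_inv_cancel₀ ha.ne'
    have h3 : 0 ≤ (a - 1) ^ 2 / a := by positivity
    have h4 : (a - 1) ^ 2 / a = a + a⁻¹ - 2 := by
      field_simp
      ring
    rw [h1]
    linarith
  have hM1 : Real.sqrt u ≤ ‖(((1 - β / r)⁻¹ : ℝ) : ℂ)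
      - ((β : ℂ) + s * I) / ((r : ℝ) : ℂ)‖ := by
    rw [key1, abs_re_add_im]
    apply Real.sqrt_le_sqrt
    have h1 : (-(s / r)) ^ 2 = s ^ 2 / t := by rw [neg_pow]; simp [hsr2]
    have h2 : 1 ≤ ((1 - β / r)⁻¹ - β / r) ^ 2 := by
      have := hinv
      simp only [hadef] at this
      nlinarith
    simp only [hudef]
    linarith [h1, h2]
  -- abbreviations
  set M1 := ‖(((1 - β / r)⁻¹ : ℝ) : ℂ) - ((β : ℂ) + s * I) / ((r : ℝ) : ℂ)‖ with hM1def
  set M2 := ‖((1 - β / r : ℝ) : ℂ) + ((β : ℂ) + s * I) / ((r : ℝ) : ℂ)‖ with hM2def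
  set p : ℝ := (t : ℝ) + x * r with hpdef
  set q : ℝ := (t : ℝ) - x * r with hqdef
  have step1 : Real.sqrt u ^ p * Real.sqrt u ^ q ≤ M1 ^ p * M2 ^ q := by
    rw [hM2]
    exact mul_le_mul_of_nonneg_right (Real.rpow_le_rpow (Real.sqrt_nonneg u) hM1 hp)
      (Real.rpow_nonneg (Real.sqrt_nonneg u) q)
  have step2 : Real.sqrt u ^ p * Real.sqrt u ^ q = u ^ t := by
    rw [← Real.rpow_add (by linarith : 0 < Real.sqrt u)]
    have hpq : p + q = ((2 * t : ℕ) : ℝ) := by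
      simp only [hpdef, hqdef]
      push_cast
      ring
    rw [hpq, Real.rpow_natCast, pow_mul, Real.sq_sqrt hu0.le]
  -- binomial lower bound
  have hb : 1 + (t.choose k : ℝ) * (s ^ 2 / t) ^ k ≤ u ^ t := by
    simp only [hudef]
    exact aux_binom _ (by positivity) t k hk (by omega)
  have hd : ((t : ℝ)) ^ k / (2 ^ k * (Nat.factorial k : ℝ)) ≤ (t.choose k : ℝ) := by
    have h1 := aux_desc t k (by omega)
    have h2 : (t.descFactorial k : ℝ) = (Nat.factorial k : ℝ) * (t.choose k : ℝ) := by
      exact_mod_cast congrArg (Nat.cast : ℕ → ℝ) (Nat.descFactorial_eq_factorial_mul_choose t k)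
    rw [h2, div_pow] at h1
    rw [div_le_iff₀ (by positivity)]
    rw [div_le_iff₀ (by positivity : (0:ℝ) < 2 ^ k)] at h1
    exact le_of_le_of_eq h1 (by ring)
  have hsk : (0 : ℝ) ≤ s ^ (2 * k) := by
    rw [pow_mul]; positivity
  have hc : s ^ (2 * k) / (2 ^ k * (Nat.factorial k : ℝ)) ≤ (t.choose k : ℝ) * (s ^ 2 / t) ^ k := by
    have htk : (0 : ℝ) < (t : ℝ) ^ k := by positivity
    calc s ^ (2 * k) / (2 ^ k * (Nat.factorial k : ℝ))
        = ((t : ℝ) ^ k / (2 ^ k * (Nat.factorial k : ℝ))) * (s ^ (2 * k) / (t : ℝ) ^ k) := by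
          field_simp
      _ ≤ (t.choose k : ℝ) * (s ^ (2 * k) / (t : ℝ) ^ k) :=
          mul_le_mul_of_nonneg_right hd (by positivity)
      _ = (t.choose k : ℝ) * (s ^ 2 / t) ^ k := by
          rw [div_pow, pow_mul]
  have hY : (0 : ℝ) < 1 + s ^ (2 * k) / (2 ^ k * (Nat.factorial k : ℝ)) := by
    have : (0 : ℝ) ≤ s ^ (2 * k) / (2 ^ k * (Nat.factorial k : ℝ)) := by positivity
    linarith
  have hXY : 1 + s ^ (2 * k) / (2 ^ k * (Nat.factorial k : ℝ)) ≤ M1 ^ p * M2 ^ q := by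
    calc 1 + s ^ (2 * k) / (2 ^ k * (Nat.factorial k : ℝ))
        ≤ 1 + (t.choose k : ℝ) * (s ^ 2 / t) ^ k := by linarith
      _ ≤ u ^ t := hb
      _ = Real.sqrt u ^ p * Real.sqrt u ^ q := step2.symm
      _ ≤ M1 ^ p * M2 ^ q := step1
  exact one_div_le_one_div_of_le hY hXY
end

section
/- Let G be a finite bipartite planar graph with Kasteleyn matrix K (rows indexed by black vertices, columns by white vertices). If e_i = (b_i, w_i), i = 1, …, n, are distinct edges, then the probability that all of e_1, …, e_n are simultaneously covered by dimers in a random dimer covering (weighted by the product of edge weights) equals det( K(b_i, w_i) K^{-1}(w_i, b_j) )_{1 ≤ i,j ≤ n}. In particular, summing over disjoint alternatives and using multilinearity of the determinant in rows, for events that a particle is present at black vertex b_i (meaning one of two specified incident edges f_1, f_2 is covered), the probability equals det( Σ_{r=1}^{2} K(b_i, b_i+f_r) K^{-1}(b_i+f_r, b_j) )_{1 ≤ i,j ≤ n}. -/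
open Finset

lemma det_row_expand {N : ℕ} (A : Matrix (Fin N) (Fin N) ℂ) :
    A.det = ∑ σ : Equiv.Perm (Fin N), (Equiv.Perm.sign σ : ℂ) * ∏ i, A i (σ i) := by
  rw [← Matrix.det_transpose, Matrix.det_apply']
  simp [Matrix.transpose_apply]

lemma det_of_eq_one_outside {n N : ℕ} (A : Matrix (Fin N) (Fin N) ℂ) (b : Fin n → Fin N)
    (hb : Function.Injective b)
    (hA : ∀ r, r ∉ Set.range b → ∀ j, A r j = if r = j then 1 else 0) :
    A.det = Matrix.det (Matrix.of fun i j : Fin n => A (b i) (b j)) := by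
  classical
  let e : Fin n ⊕ {x // x ∉ Set.range b} ≃ Fin N :=
    ((Equiv.ofInjective b hb).sumCongr (Equiv.refl _)).trans
      (Equiv.sumCompl (fun x => x ∈ Set.range b))
  rw [← Matrix.det_submatrix_equiv_self e A]
  have he1 : ∀ i : Fin n, e (Sum.inl i) = b i := fun i => rfl
  have he2 : ∀ x : {x // x ∉ Set.range b}, e (Sum.inr x) = x.1 := fun x => rfl
  have : A.submatrix e e = Matrix.fromBlocks
      (Matrix.of fun i j : Fin n => A (b i) (b j))
      (Matrix.of fun (i : Fin n) (y : {x // x ∉ Set.range b}) => A (b i) y.1) 0 1 := by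
    ext x y
    cases x with
    | inl i => cases y with
      | inl j => simp [Matrix.submatrix_apply, he1]
      | inr yy => simp [Matrix.submatrix_apply, he1, he2]
    | inr xx => cases y with
      | inl j =>
        have hne : xx.1 ≠ b j := fun h => xx.2 ⟨j, h.symm⟩
        simp [Matrix.submatrix_apply, he1, he2, hA xx.1 xx.2, hne]
      | inr yy =>
        simp [Matrix.submatrix_apply, he2, hA xx.1 xx.2, Matrix.one_apply,
          Subtype.ext_iff]
  rw [this, Matrix.det_fromBlocks_zero₂₁]
  simp

lemma kenyon_master {n N : ℕ} (K : Matrix (Fin N) (Fin N) ℂ)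
    (wt : Equiv.Perm (Fin N) → ℝ) (c : ℂ) (hc : c ≠ 0)
    (hKast : ∀ σ : Equiv.Perm (Fin N),
      (Equiv.Perm.sign σ : ℂ) * ∏ i, K i (σ i) = c * (wt σ : ℝ))
    (hK : IsUnit K.det)
    (Z : ℝ) (hZ : Z = ∑ σ : Equiv.Perm (Fin N), wt σ) (hZ0 : (Z : ℂ) ≠ 0)
    (b : Fin n → Fin N) (hb : Function.Injective b)
    (p : Fin n → Fin N → Prop) [∀ i k, Decidable (p i k)]
    (v : Fin n → Fin N → ℂ)
    (hv1 : ∀ i k, p i k → v i k = K (b i) k)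
    (hv0 : ∀ i k, ¬ p i k → v i k = 0) :
    (((∑ σ ∈ Finset.univ.filter
          (fun σ : Equiv.Perm (Fin N) => ∀ i, p i (σ (b i))), wt σ) / Z : ℝ) : ℂ)
      = Matrix.det (Matrix.of fun i j : Fin n => ∑ k, v i k * (K⁻¹) k (b j)) := by
  classical
  set M : Matrix (Fin N) (Fin N) ℂ :=
    Matrix.of (fun r j => if h : ∃ i, b i = r then v h.choose j else K r j) with hM
  have hMb : ∀ i j, M (b i) j = v i j := by
    intro i j
    have h : ∃ i', b i' = b i := ⟨i, rfl⟩
    have hch : h.choose = i := hb h.choose_spec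
    simp only [hM, Matrix.of_apply, dif_pos h, hch]
  have hMr : ∀ r, r ∉ Set.range b → ∀ j, M r j = K r j := by
    intro r hr j
    have h : ¬ ∃ i, b i = r := by simpa [Set.range] using hr
    simp only [hM, Matrix.of_apply, dif_neg h]
  -- det M = c * (filtered sum)
  have hdetM : M.det = c * ((∑ σ ∈ Finset.univ.filter
      (fun σ : Equiv.Perm (Fin N) => ∀ i, p i (σ (b i))), wt σ : ℝ) : ℂ) := by
    rw [det_row_expand M]
    rw [← Finset.sum_filter_add_sum_filter_not Finset.univ
      (fun σ : Equiv.Perm (Fin N) => ∀ i, p i (σ (b i)))]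
    have hz : ∑ σ ∈ Finset.univ.filter
        (fun σ : Equiv.Perm (Fin N) => ¬ ∀ i, p i (σ (b i))),
        (Equiv.Perm.sign σ : ℂ) * ∏ r, M r (σ r) = 0 := by
      apply Finset.sum_eq_zero
      intro σ hσ
      simp only [Finset.mem_filter, Finset.mem_univ, true_and, not_forall] at hσ
      obtain ⟨i, hi⟩ := hσ
      have : ∏ r, M r (σ r) = 0 := by
        apply Finset.prod_eq_zero (Finset.mem_univ (b i))
        rw [hMb, hv0 _ _ hi]
      rw [this, mul_zero]
    rw [hz, add_zero]
    have hterm : ∀ σ ∈ Finset.univ.filter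
        (fun σ : Equiv.Perm (Fin N) => ∀ i, p i (σ (b i))),
        (Equiv.Perm.sign σ : ℂ) * ∏ r, M r (σ r) = c * (wt σ : ℝ) := by
      intro σ hσ
      simp only [Finset.mem_filter, Finset.mem_univ, true_and] at hσ
      have : ∏ r, M r (σ r) = ∏ r, K r (σ r) := by
        apply Finset.prod_congr rfl
        intro r _
        by_cases hr : r ∈ Set.range b
        · obtain ⟨i, rfl⟩ := hr
          rw [hMb, hv1 _ _ (hσ i)]
        · rw [hMr r hr]
      rw [this, hKast σ]
    rw [Finset.sum_congr rfl hterm, ← Finset.mul_sum]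
    push_cast
    ring
  have hdetK : K.det = c * (Z : ℂ) := by
    rw [det_row_expand K]
    simp_rw [hKast]
    rw [← Finset.mul_sum, hZ]
    push_cast
    ring
  -- compute M * K⁻¹
  have hKinv : K * K⁻¹ = 1 := Matrix.mul_nonsing_inv K hK
  have houtside : ∀ r, r ∉ Set.range b → ∀ j, (M * K⁻¹) r j = if r = j then 1 else 0 := by
    intro r hr j
    rw [Matrix.mul_apply]
    have : ∀ k, M r k * (K⁻¹) k j = K r k * (K⁻¹) k j := fun k => by rw [hMr r hr]
    rw [Finset.sum_congr rfl (fun k _ => this k), ← Matrix.mul_apply, hKinv,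
      Matrix.one_apply]
  have hdetMK : (M * K⁻¹).det
      = Matrix.det (Matrix.of fun i j : Fin n => ∑ k, v i k * (K⁻¹) k (b j)) := by
    rw [det_of_eq_one_outside (M * K⁻¹) b hb houtside]
    congr 1
    ext i j
    simp only [Matrix.of_apply, Matrix.mul_apply, hMb]
  have hdetinv : (K⁻¹).det = (K.det)⁻¹ := by
    rw [Matrix.det_nonsing_inv, Ring.inverse_eq_inv']
  rw [← hdetMK, Matrix.det_mul, hdetM, hdetinv, hdetK]
  have hKd : K.det ≠ 0 := by rw [hdetK]; exact mul_ne_zero hc hZ0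
  push_cast
  field_simp


/-- Kenyon's formula for the dimer model on a finite bipartite graph with Kasteleyn
matrix `K`. Black and white vertices are both indexed by `Fin N`; a dimer covering is a
permutation `σ` matching black vertex `i` to white vertex `σ i`. `wt σ ≥ 0` is the weight
of the covering (the product of its edge weights, zero for non-coverings), the Kasteleyn
property says that each signed product `sgn(σ) ∏ K(i, σ i)` equals `c · wt σ` for a fixed
unimodular constant `c`, and `Z` is the partition function.  Then:

* for distinct edges `(b i, w i)` the probability that all of them are covered equals
  `det (K(b i, w i) K⁻¹(w i, b j))`;
* for particle events "one of the two edges `(b i, w i)`, `(b i, w₂ i)` is covered" the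
  probability equals `det (Σ_{r} K(b i, w_r i) K⁻¹(w_r i, b j))`. -/
theorem stmt7 {n N : ℕ} (K : Matrix (Fin N) (Fin N) ℂ)
    (wt : Equiv.Perm (Fin N) → ℝ) (hwt : ∀ σ, 0 ≤ wt σ)
    (c : ℂ) (hc : ‖c‖ = 1)
    (hKast : ∀ σ : Equiv.Perm (Fin N),
      (Equiv.Perm.sign σ : ℂ) * ∏ i, K i (σ i) = c * (wt σ : ℝ))
    (hK : IsUnit K.det)
    (Z : ℝ) (hZ : Z = ∑ σ : Equiv.Perm (Fin N), wt σ) (hZpos : 0 < Z)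
    (b w : Fin n → Fin N) (hb : Function.Injective b) (hw : Function.Injective w) :
    (((∑ σ ∈ Finset.univ.filter
          (fun σ : Equiv.Perm (Fin N) => ∀ i, σ (b i) = w i), wt σ) / Z : ℝ) : ℂ)
      = Matrix.det (Matrix.of fun i j : Fin n => K (b i) (w i) * (K⁻¹) (w i) (b j))
    ∧ ∀ w₂ : Fin n → Fin N, Function.Injective w₂ → (∀ i, w i ≠ w₂ i) →
      (((∑ σ ∈ Finset.univ.filter
            (fun σ : Equiv.Perm (Fin N) => ∀ i, σ (b i) = w i ∨ σ (b i) = w₂ i), wt σ) / Z : ℝ) : ℂ)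
        = Matrix.det (Matrix.of fun i j : Fin n =>
            K (b i) (w i) * (K⁻¹) (w i) (b j) + K (b i) (w₂ i) * (K⁻¹) (w₂ i) (b j)) := by
    classical
  have hc0 : c ≠ 0 := by
    intro h; rw [h] at hc; simp at hc
  have hZ0 : (Z : ℂ) ≠ 0 := by
    exact_mod_cast ne_of_gt hZpos
  constructor
  · have := kenyon_master K wt c hc0 hKast hK Z hZ hZ0 b hb
      (fun i k => k = w i)
      (fun i k => K (b i) (w i) * (if k = w i then 1 else 0))
      (fun i k hk => by rw [hk]; simp)
      (fun i k hk => by simp [hk])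
    rw [this]
    congr 1
    ext i j
    simp [mul_ite, ite_mul, mul_assoc]
  · intro w₂ hw₂ hne
    have := kenyon_master K wt c hc0 hKast hK Z hZ hZ0 b hb
      (fun i k => k = w i ∨ k = w₂ i)
      (fun i k => K (b i) (w i) * (if k = w i then 1 else 0)
        + K (b i) (w₂ i) * (if k = w₂ i then 1 else 0))
      (fun i k hk => by
        rcases hk with hk | hk
        · subst hk; simp [hne i]
        · subst hk; simp [(hne i).symm]
        )
      (fun i k hk => by
        simp only [not_or] at hk
        simp [hk.1, hk.2])
    rw [this]
    congr 1
    ext i j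
    rw [Matrix.of_apply, Matrix.of_apply]
    rw [Finset.sum_congr rfl (fun k _ => add_mul _ _ _), Finset.sum_add_distrib]
    simp [mul_ite, ite_mul, mul_assoc]
end

section
/- Let a = 1 − β/√t and define f_β(ζ) = e^{2βζ − ζ²}, g_{x,β}(ζ) = e^{2x(β−ζ)}, G_{x,t}(ζ) = ((a^{-1} − ζ/√t)/(a + ζ/√t))^{x√t} and F_{0,t}(ζ) = ((a^{-1} − ζ/√t)(a + ζ/√t))^t. Then for any fixed compact set not containing −a√t or a^{-1}√t, there exist t_0 and C such that for all t ≥ t_0, x ∈ [−A,A], and ζ in the compact set: |G_{x,t}(ζ)/g_{x,β}(ζ) − 1| ≤ C/√t and |F_{0,t}(ζ)/f_β(ζ) − 1| ≤ C/√t. -/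
open Complex

lemma auxLog (v : ℂ) (hv : ‖v‖ ≤ 1/2) : ‖Complex.log (1 + v) - v‖ ≤ ‖v‖ ^ 2 := by
  have h1 := Complex.norm_log_one_add_sub_self_le (z := v) (by linarith [norm_nonneg v])
  have h2 : (1 - ‖v‖)⁻¹ ≤ 2 := by
    rw [inv_le_comm₀ (by linarith) (by norm_num)]
    linarith
  have h3 : 0 ≤ ‖v‖ ^ 2 := by positivity
  calc ‖Complex.log (1 + v) - v‖ ≤ ‖v‖ ^ 2 * (1 - ‖v‖)⁻¹ / 2 := h1
    _ ≤ ‖v‖ ^ 2 * 2 / 2 := by nlinarith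
    _ = ‖v‖ ^ 2 := by ring

lemma auxExp (z q p : ℂ) (hz : ‖z - 1‖ ≤ 1/2) (h : ‖p * Complex.log z - q‖ ≤ 1) :
    ‖z ^ p * (Complex.exp q)⁻¹ - 1‖ ≤ 2 * ‖p * Complex.log z - q‖ := by
  have hz0 : z ≠ 0 := by
    intro h0
    rw [h0] at hz
    norm_num at hz
  rw [Complex.cpow_def_of_ne_zero hz0, ← Complex.exp_neg, ← Complex.exp_add]
  have e : Complex.log z * p + -q = p * Complex.log z - q := by ring
  rw [e]
  exact Complex.norm_exp_sub_one_le h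

lemma sub_ne (b S : ℂ) (hS : S ≠ 0) (ha : 1 - b*S⁻¹ ≠ 0) : S - b ≠ 0 := by
  intro h
  apply ha
  have hb : b = S := by linear_combination -h
  rw [hb, mul_inv_cancel₀ hS]
  ring

lemma idA (b z S : ℂ) (hS : S ≠ 0) (ha : 1 - b*S⁻¹ ≠ 0) :
    (((1 - b*S⁻¹)⁻¹ - z*S⁻¹) - ((1 - b*S⁻¹) + z*S⁻¹))
      = 2*(b - z)*S⁻¹ + b^2*(S⁻¹)^2*(1 - b*S⁻¹)⁻¹ := by
  have h := sub_ne b S hS ha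
  field_simp
  ring

lemma idC (b z S x : ℂ) (hS : S ≠ 0) (ha : 1 - b*S⁻¹ ≠ 0)
    (hD : (1 - b*S⁻¹) + z*S⁻¹ ≠ 0) :
    x*S*(((((1 - b*S⁻¹)⁻¹ - z*S⁻¹) - ((1 - b*S⁻¹) + z*S⁻¹)))*((1 - b*S⁻¹) + z*S⁻¹)⁻¹)
        - 2*x*(b - z)
      = (2*x*(b-z)*(1-((1 - b*S⁻¹) + z*S⁻¹)) + x*b^2*S⁻¹*(1 - b*S⁻¹)⁻¹)
          *((1 - b*S⁻¹) + z*S⁻¹)⁻¹ := by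
  have h := sub_ne b S hS ha
  have hD' : S - b + z ≠ 0 := by
    intro hh
    apply hD
    field_simp
    linear_combination hh
  field_simp
  ring

lemma idD (b z S : ℂ) (hS : S ≠ 0) (ha : 1 - b*S⁻¹ ≠ 0) :
    ((1 - b*S⁻¹)⁻¹ - z*S⁻¹) * ((1 - b*S⁻¹) + z*S⁻¹) - 1
      = (2*b*z - z^2)*(S⁻¹)^2 + z*b^2*(S⁻¹)^3*(1 - b*S⁻¹)⁻¹ := by
  have h := sub_ne b S hS ha
  field_simp
  ring

lemma idE (b z S : ℂ) (hS : S ≠ 0) (ha : 1 - b*S⁻¹ ≠ 0) :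
    S^2*(((1 - b*S⁻¹)⁻¹ - z*S⁻¹) * ((1 - b*S⁻¹) + z*S⁻¹) - 1) - (2*b*z - z^2)
      = z*b^2*S⁻¹*(1 - b*S⁻¹)⁻¹ := by
  have h := sub_ne b S hS ha
  field_simp
  ring

lemma mulLe2 {a b a' b' : ℝ} (ha : a ≤ a') (hb : b ≤ b') (h0b : 0 ≤ b) (h0a' : 0 ≤ a') :
    a*b ≤ a'*b' := mul_le_mul ha hb h0b h0a'

lemma mulLe4 {a b c d a' b' c' d' : ℝ} (ha : a ≤ a') (hb : b ≤ b') (hc : c ≤ c')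
    (hd : d ≤ d') (h0b : 0 ≤ b) (h0c : 0 ≤ c) (h0d : 0 ≤ d)
    (h0a' : 0 ≤ a') (h0b' : 0 ≤ b') (h0c' : 0 ≤ c') :
    a*b*c*d ≤ a'*b'*c'*d' :=
  mulLe2 (mulLe2 (mulLe2 ha hb h0b h0a') hc h0c (mul_nonneg h0a' h0b'))
    hd h0d (mul_nonneg (mul_nonneg h0a' h0b') h0c')

set_option maxHeartbeats 2000000 in
/-- With `a = 1 − β/√t`, `g_{x,β}(ζ) = e^{2x(β−ζ)}`, `f_β(ζ) = e^{2βζ−ζ²}`,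
`G_{x,t}(ζ) = ((a⁻¹ − ζ/√t)/(a + ζ/√t))^{x√t}` and `F_{0,t}(ζ) = ((a⁻¹ − ζ/√t)(a + ζ/√t))^t`:
for any compact set (which, for `t` large, does not contain the singular points
`−a√t`, `a⁻¹√t`), there are `t₀` and `C` such that for all `t ≥ t₀`, `x ∈ [−A,A]` and `ζ`
in the compact set, `|G_{x,t}(ζ)/g_{x,β}(ζ) − 1| ≤ C/√t` and `|F_{0,t}(ζ)/f_β(ζ) − 1| ≤ C/√t`. -/
theorem stmt14 (A β : ℝ) (hA : 0 < A) (Ks : Set ℂ) (hK : IsCompact Ks) :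
    ∃ t0 C : ℝ, 0 < t0 ∧ 0 < C ∧ ∀ t : ℝ, t0 ≤ t → ∀ x ∈ Set.Icc (-A) A, ∀ ζ ∈ Ks,
      ‖(
          (((((1 - β / Real.sqrt t)⁻¹ : ℝ) : ℂ) - ζ / (Real.sqrt t : ℂ))
              / (((1 - β / Real.sqrt t : ℝ) : ℂ) + ζ / (Real.sqrt t : ℂ)))
            ^ (((x * Real.sqrt t : ℝ) : ℂ))
            / Complex.exp (2 * (x : ℂ) * ((β : ℂ) - ζ)) - 1)‖ ≤ C / Real.sqrt t
      ∧ ‖(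
          (((((1 - β / Real.sqrt t)⁻¹ : ℝ) : ℂ) - ζ / (Real.sqrt t : ℂ))
              * (((1 - β / Real.sqrt t : ℝ) : ℂ) + ζ / (Real.sqrt t : ℂ)))
            ^ (((t : ℝ) : ℂ))
            / Complex.exp (2 * (β : ℂ) * ζ - ζ ^ 2) - 1)‖ ≤ C / Real.sqrt t := by
  obtain ⟨R, hR⟩ := hK.isBounded.exists_norm_le
  set M := |β| + A + |R| + 2 with hMdef
  have hM0 : (0:ℝ) < M := by rw [hMdef]; positivity
  have hM1 : (1:ℝ) ≤ M := by rw [hMdef]; nlinarith [abs_nonneg β, abs_nonneg R]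
  clear_value M
  refine ⟨(200*M^3)^2, 1000*M^6, by positivity, by positivity, ?_⟩
  intro t ht x hx ζ hζ
  have ht0 : (0:ℝ) < t := lt_of_lt_of_le (by positivity) ht
  have hβM : |β| ≤ M := by rw [hMdef]; nlinarith [abs_nonneg R]
  have hxA : |x| ≤ A := abs_le.mpr ⟨hx.1, hx.2⟩
  have hxM : |x| ≤ M := by rw [hMdef]; nlinarith [abs_nonneg β, abs_nonneg R, abs_nonneg x]
  have hzM : ‖ζ‖ ≤ M := le_trans (hR ζ hζ) (by rw [hMdef]; nlinarith [le_abs_self R, abs_nonneg β])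
  set st := Real.sqrt t with hstdef
  have hst0 : 0 < st := Real.sqrt_pos.mpr ht0
  have hstM : 200*M^3 ≤ st := by
    have h := Real.sqrt_le_sqrt ht
    rwa [Real.sqrt_sq (by positivity)] at h
  push_cast
  simp only [div_eq_mul_inv]
  set s := st⁻¹ with hsdef
  have hs0 : 0 < s := by rw [hsdef]; positivity
  have hss : st * s = 1 := by rw [hsdef]; exact mul_inv_cancel₀ hst0.ne'
  have hsb : 200*M^3*s ≤ 1 := by nlinarith [mul_le_mul_of_nonneg_right hstM hs0.le]
  clear_value st s
  have hM3s : M^3*s ≤ 1/200 := by linarith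
  have hsq1 : 1 ≤ M^2 := by nlinarith
  have hcube : M ≤ M^3 := by nlinarith [mul_le_mul_of_nonneg_left hsq1 hM0.le]
  have hMs : M*s ≤ 1/200 := by
    nlinarith [mul_le_mul_of_nonneg_right hcube hs0.le]
  have hs200 : s ≤ 1/200 := by nlinarith [mul_le_mul_of_nonneg_right hM1 hs0.le]
  have hM23 : M^2 ≤ M^3 := by nlinarith [mul_le_mul_of_nonneg_left hM1 (mul_pos hM0 hM0).le]
  have hM36 : M^3 ≤ M^6 := by
    have h13 : (1:ℝ) ≤ M^3 := by nlinarith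
    nlinarith [mul_le_mul_of_nonneg_left h13 (pow_nonneg hM0.le 3)]
  set S : ℂ := ((st : ℝ) : ℂ) with hSdef
  have hSnorm : ‖S‖ = st := by
    rw [hSdef, Complex.norm_real, Real.norm_eq_abs, abs_of_pos hst0]
  have hS0 : S ≠ 0 := by
    intro h
    rw [h] at hSnorm
    simp at hSnorm
    linarith
  have hSinv : ‖S⁻¹‖ = s := by rw [norm_inv, hSnorm, hsdef]
  clear_value S
  have hbM : ‖((β:ℝ):ℂ)‖ ≤ M := by rw [Complex.norm_real, Real.norm_eq_abs]; exact hβM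
  have hxnorm : ‖((x:ℝ):ℂ)‖ ≤ M := by rw [Complex.norm_real, Real.norm_eq_abs]; exact hxM
  set aa : ℂ := 1 - ↑β * S⁻¹ with haadef
  have hbS : ‖(↑β * S⁻¹ : ℂ)‖ ≤ M*s := by
    rw [norm_mul, hSinv]
    exact mul_le_mul_of_nonneg_right hbM hs0.le
  have haaLB : 1/2 ≤ ‖aa‖ := by
    have h := norm_sub_norm_le (1:ℂ) (↑β * S⁻¹)
    rw [← haadef] at h
    simp only [norm_one] at h
    linarith
  have haa0 : aa ≠ 0 := by
    intro h
    rw [h, norm_zero] at haaLB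
    linarith
  have haainv : ‖aa⁻¹‖ ≤ 2 := by
    rw [norm_inv, inv_le_comm₀ (by linarith) (by norm_num)]
    linarith
  set N : ℂ := aa⁻¹ - ζ * S⁻¹ with hNdef
  set D : ℂ := aa + ζ * S⁻¹ with hDdef
  clear_value aa N D
  have haa0' : (1:ℂ) - ↑β * S⁻¹ ≠ 0 := by rw [← haadef]; exact haa0
  have hβζ : ‖((↑β:ℂ) - ζ)‖ ≤ 2*M := by
    refine le_trans (norm_sub_le _ _) ?_
    rw [Complex.norm_real, Real.norm_eq_abs]
    linarith
  have hβ2 : ‖((β:ℝ):ℂ)‖^2 ≤ M^2 := pow_le_pow_left₀ (norm_nonneg _) hbM 2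
  have hDm1 : ‖D - 1‖ ≤ 2*M*s := by
    have e : D - 1 = (ζ - ↑β) * S⁻¹ := by rw [hDdef, haadef]; ring
    have hζβ : ‖(ζ - ↑β : ℂ)‖ ≤ 2*M := by rw [norm_sub_rev]; exact hβζ
    rw [e, norm_mul, hSinv]
    calc ‖(ζ - ↑β : ℂ)‖ * s ≤ (2*M)*s := mul_le_mul_of_nonneg_right hζβ hs0.le
      _ = 2*M*s := by ring
  have hDLB : 1/2 ≤ ‖D‖ := by
    have e : (1:ℂ) = D - (D - 1) := by ring
    have h : (1:ℝ) ≤ ‖D‖ + ‖D - 1‖ := by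
      calc (1:ℝ) = ‖(1:ℂ)‖ := by simp
        _ = ‖D - (D - 1)‖ := by rw [← e]
        _ ≤ ‖D‖ + ‖D - 1‖ := norm_sub_le _ _
    linarith [hMs]
  have hD0 : D ≠ 0 := by
    intro h
    rw [h, norm_zero] at hDLB
    linarith
  have hDinv : ‖D⁻¹‖ ≤ 2 := by
    rw [norm_inv, inv_le_comm₀ (by linarith) (by norm_num)]
    linarith
  -- norm of N - D
  have eA := idA (↑β) ζ S hS0 haa0'
  rw [← haadef, ← hNdef, ← hDdef] at eA
  have hNmD : ‖N - D‖ ≤ 5*M*s := by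
    rw [eA]
    refine le_trans (norm_add_le _ _) ?_
    have c1 : ‖(2*(↑β - ζ)*S⁻¹ : ℂ)‖ ≤ 2*(2*M)*s := by
      rw [norm_mul, norm_mul, hSinv]
      have h2 : ‖(2:ℂ)‖ = 2 := by norm_num
      rw [h2]
      exact mul_le_mul_of_nonneg_right (by linarith) hs0.le
    have c2 : ‖((↑β:ℂ)^2*(S⁻¹)^2*aa⁻¹)‖ ≤ M^2*s^2*2 := by
      simp only [norm_mul, norm_pow, hSinv]
      refine mulLe2 (mulLe2 hβ2 le_rfl (by positivity) (by positivity)) haainv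
        (norm_nonneg _) (by positivity)
    have c6 : 2*(M^2*s^2) ≤ M*s := by
      nlinarith [hMs, mul_nonneg hM0.le hs0.le]
    nlinarith [mul_nonneg hM0.le hs0.le]
  have hveq : (N - D)*D⁻¹ = N*D⁻¹ - 1 := by
    rw [sub_mul, mul_inv_cancel₀ hD0]
  have hvnorm : ‖(N - D)*D⁻¹‖ ≤ 10*M*s := by
    rw [norm_mul]
    have := mulLe2 hNmD hDinv (norm_nonneg _)
      (mul_nonneg (mul_nonneg (by norm_num) hM0.le) hs0.le)
    linarith
  have hvhalf : ‖(N - D)*D⁻¹‖ ≤ 1/2 := by nlinarith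
  have hz1 : ‖N*D⁻¹ - 1‖ ≤ 1/2 := by rw [← hveq]; exact hvhalf
  have h1p : N*D⁻¹ = 1 + (N - D)*D⁻¹ := by rw [hveq]; ring
  have hlog : ‖Complex.log (N*D⁻¹) - (N - D)*D⁻¹‖ ≤ 100*M^2*s^2 := by
    have h := auxLog ((N - D)*D⁻¹) hvhalf
    rw [← h1p] at h
    refine h.trans ?_
    calc ‖(N - D)*D⁻¹‖^2 ≤ (10*M*s)^2 :=
          pow_le_pow_left₀ (norm_nonneg _) hvnorm 2
      _ = 100*M^2*s^2 := by ring
  -- key estimate part 1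
  have eC := idC (↑β) ζ S (↑x) hS0 haa0' (by rw [← haadef, ← hDdef]; exact hD0)
  rw [← haadef, ← hNdef, ← hDdef] at eC
  have hkey1 : ‖(↑x*S) * Complex.log (N*D⁻¹) - 2*↑x*(↑β - ζ)‖ ≤ 120*M^3*s := by
    have split : (↑x*S) * Complex.log (N*D⁻¹) - 2*↑x*(↑β - ζ)
        = (↑x*S)*(Complex.log (N*D⁻¹) - (N - D)*D⁻¹)
          + ((↑x*S)*((N - D)*D⁻¹) - 2*↑x*(↑β - ζ)) := by ring
    rw [split]
    refine le_trans (norm_add_le _ _) ?_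
    have b1 : ‖(↑x*S)*(Complex.log (N*D⁻¹) - (N - D)*D⁻¹)‖ ≤ 100*M^3*s := by
      rw [norm_mul, norm_mul, hSnorm]
      calc ‖((x:ℝ):ℂ)‖ * st * ‖Complex.log (N*D⁻¹) - (N - D)*D⁻¹‖
          ≤ M * st * (100*M^2*s^2) := by gcongr
        _ = 100*M^3*s*(st*s) := by ring
        _ = 100*M^3*s := by rw [hss, mul_one]
    have b2 : ‖(↑x*S)*((N - D)*D⁻¹) - 2*↑x*(↑β - ζ)‖ ≤ 20*M^3*s := by
      rw [eC, norm_mul]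
      have c3 : ‖(2*↑x*(↑β-ζ)*(1-D) : ℂ)‖ ≤ 8*M^3*s := by
        rw [norm_mul, norm_mul, norm_mul]
        have h2 : ‖(2:ℂ)‖ = 2 := by norm_num
        rw [h2]
        have h1D : ‖(1 - D : ℂ)‖ ≤ 2*M*s := by rw [norm_sub_rev]; exact hDm1
        calc 2*‖((x:ℝ):ℂ)‖*‖((↑β:ℂ) - ζ)‖*‖(1 - D : ℂ)‖
            ≤ 2*M*(2*M)*(2*M*s) := by
              refine mulLe4 le_rfl hxnorm hβζ h1D (norm_nonneg _) (norm_nonneg _)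
                (norm_nonneg _) (by norm_num) hM0.le (by linarith)
          _ = 8*M^3*s := by ring
      have c4 : ‖(↑x*↑β^2*S⁻¹*aa⁻¹ : ℂ)‖ ≤ 2*M^3*s := by
        simp only [norm_mul, norm_pow, hSinv]
        calc ‖((x:ℝ):ℂ)‖*‖((β:ℝ):ℂ)‖^2*s*‖aa⁻¹‖ ≤ M*M^2*s*2 := by
              refine mulLe4 hxnorm hβ2 le_rfl haainv (by positivity) hs0.le
                (norm_nonneg _) hM0.le (by positivity) hs0.le
          _ = 2*M^3*s := by ring
      have c5 : ‖(2*↑x*(↑β-ζ)*(1-D) + ↑x*↑β^2*S⁻¹*aa⁻¹ : ℂ)‖ ≤ 10*M^3*s :=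
        le_trans (norm_add_le _ _) (by linarith)
      have := mulLe2 c5 hDinv (norm_nonneg _)
        (mul_nonneg (mul_nonneg (by norm_num) (pow_nonneg hM0.le 3)) hs0.le)
      linarith
    linarith
  have hkey1le : ‖(↑x*S) * Complex.log (N*D⁻¹) - 2*↑x*(↑β - ζ)‖ ≤ 1 := by linarith
  constructor
  · have t1 := auxExp (N*D⁻¹) (2*↑x*(↑β - ζ)) (↑x*S) hz1
    have t2 := t1 hkey1le
    refine le_trans t2 ?_
    have h := mul_le_mul_of_nonneg_right hM36 hs0.le
    linarith [mul_nonneg (pow_nonneg hM0.le 6) hs0.le]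
  · -- part 2
    have hT : ((t:ℝ):ℂ) = S^2 := by
      have h : st^2 = t := by rw [hstdef]; exact Real.sq_sqrt ht0.le
      rw [hSdef, ← h]
      push_cast
      ring
    rw [hT]
    have eD := idD (↑β) ζ S hS0 haa0'
    rw [← haadef, ← hNdef, ← hDdef] at eD
    have hq2 : ‖(2*↑β*ζ - ζ^2 : ℂ)‖ ≤ 3*M^2 := by
      refine le_trans (norm_sub_le _ _) ?_
      rw [norm_mul, norm_mul, norm_pow]
      have h2 : ‖(2:ℂ)‖ = 2 := by norm_num
      rw [h2]
      have e1 : 2*‖((β:ℝ):ℂ)‖*‖ζ‖ ≤ 2*M*M := by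
        refine mulLe2 (mulLe2 le_rfl hbM (norm_nonneg _) (by norm_num)) hzM
          (norm_nonneg _) (by positivity)
      have e2 : ‖ζ‖^2 ≤ M^2 := pow_le_pow_left₀ (norm_nonneg _) hzM 2
      nlinarith
    have hw : ‖N*D - 1‖ ≤ 4*M^3*s^2 := by
      rw [eD]
      refine le_trans (norm_add_le _ _) ?_
      have c1 : ‖((2*↑β*ζ - ζ^2)*(S⁻¹)^2 : ℂ)‖ ≤ 3*M^2*s^2 := by
        rw [norm_mul, norm_pow, hSinv]
        calc ‖(2*↑β*ζ - ζ^2 : ℂ)‖ * s^2 ≤ (3*M^2)*s^2 :=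
              mul_le_mul_of_nonneg_right hq2 (by positivity)
          _ = 3*M^2*s^2 := by ring
      have c2 : ‖(ζ*↑β^2*(S⁻¹)^3*aa⁻¹ : ℂ)‖ ≤ 2*M^3*s^3 := by
        simp only [norm_mul, norm_pow, hSinv]
        calc ‖ζ‖*‖((β:ℝ):ℂ)‖^2*s^3*‖aa⁻¹‖ ≤ M*M^2*s^3*2 := by
              refine mulLe4 hzM hβ2 le_rfl haainv (by positivity) (by positivity)
                (norm_nonneg _) hM0.le (by positivity) (by positivity)
          _ = 2*M^3*s^3 := by ring
      have e1 : 3*(M^2*s^2) ≤ 3*(M^3*s^2) := by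
        have := mul_le_mul_of_nonneg_right hM23 (sq_nonneg s)
        linarith
      have e2 : 2*(M^3*s^3) ≤ M^3*s^2 := by
        nlinarith [hs200, mul_nonneg (pow_nonneg hM0.le 3) (sq_nonneg s)]
      nlinarith
    have hwhalf : ‖N*D - 1‖ ≤ 1/2 := by
      refine hw.trans ?_
      nlinarith [mul_le_mul_of_nonneg_right hM3s hs0.le, hs200, hs0.le]
    have h1p2 : N*D = 1 + (N*D - 1) := by ring
    have hlog2 : ‖Complex.log (N*D) - (N*D - 1)‖ ≤ 16*M^6*s^4 := by
      have h := auxLog (N*D - 1) hwhalf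
      rw [← h1p2] at h
      refine h.trans ?_
      calc ‖N*D - 1‖^2 ≤ (4*M^3*s^2)^2 := pow_le_pow_left₀ (norm_nonneg _) hw 2
        _ = 16*M^6*s^4 := by ring
    have eE := idE (↑β) ζ S hS0 haa0'
    rw [← haadef, ← hNdef, ← hDdef] at eE
    have hkey2 : ‖S^2 * Complex.log (N*D) - (2*↑β*ζ - ζ^2)‖ ≤ 3*M^3*s := by
      have split : S^2 * Complex.log (N*D) - (2*↑β*ζ - ζ^2)
          = S^2*(Complex.log (N*D) - (N*D - 1)) + (S^2*(N*D - 1) - (2*↑β*ζ - ζ^2)) := by ring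
      rw [split]
      refine le_trans (norm_add_le _ _) ?_
      have b1 : ‖S^2*(Complex.log (N*D) - (N*D - 1))‖ ≤ M^3*s := by
        rw [norm_mul, norm_pow, hSnorm]
        calc st^2 * ‖Complex.log (N*D) - (N*D - 1)‖ ≤ st^2 * (16*M^6*s^4) := by gcongr
          _ = 16*(M^3*s)*(M^3*s)*(st*s)^2 := by ring
          _ = 16*(M^3*s)*(M^3*s) := by rw [hss]; ring
          _ ≤ M^3*s := by nlinarith [hM3s, mul_nonneg (pow_nonneg hM0.le 3) hs0.le]
      have b2 : ‖S^2*(N*D - 1) - (2*↑β*ζ - ζ^2)‖ ≤ 2*M^3*s := by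
        rw [eE]
        simp only [norm_mul, norm_pow, hSinv]
        calc ‖ζ‖*‖((β:ℝ):ℂ)‖^2*s*‖aa⁻¹‖ ≤ M*M^2*s*2 := by
              refine mulLe4 hzM hβ2 le_rfl haainv (by positivity) hs0.le
                (norm_nonneg _) hM0.le (by positivity) hs0.le
          _ = 2*M^3*s := by ring
      linarith
    have hkey2le : ‖S^2 * Complex.log (N*D) - (2*↑β*ζ - ζ^2)‖ ≤ 1 := by linarith
    have t1 := auxExp (N*D) (2*↑β*ζ - ζ^2) (S^2) hwhalf
    have t2 := t1 hkey2le
    refine le_trans t2 ?_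
    have h := mul_le_mul_of_nonneg_right hM36 hs0.le
    linarith [mul_nonneg (pow_nonneg hM0.le 6) hs0.le]
end

section
/- For 0 < a < 1, integers n ≥ 1, j with 1 ≤ j ≤ m, and odd b2 ≥ 1, the contour integral (1/(2πi)) ∮_{Γ_{0,a}} (1+a²) w^{−1+j−2m} (w−a)^{−(3+b2)/2} (1+aw)^{(b2−1)/2} dw equals 0, provided the contour Γ_{0,a} encloses 0 and a but not −1/a, since the integrand has no pole at −1/a or at infinity when deformed outward. -/
open Complex Metric Set Filter

lemma zpow_mono_base' {x y : ℝ} (hx : 0 ≤ x) (hxy : x ≤ y) {n : ℤ} (hn : 0 ≤ n) :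
    x ^ n ≤ y ^ n := by
  lift n to ℕ using hn
  rw [zpow_natCast, zpow_natCast]
  exact pow_le_pow_left₀ hx hxy _

lemma zpow_anti_base' {x y : ℝ} (hx : 0 < x) (hxy : x ≤ y) {n : ℤ} (hn : 0 ≤ n) :
    y ^ (-n) ≤ x ^ (-n) := by
  rw [zpow_neg, zpow_neg]
  exact inv_anti₀ (zpow_pos hx n) (zpow_mono_base' hx.le hxy hn)

/-- Vanishing of the `Δ_L` term in the left-boundary case of the inverse Kasteleyn
verification: for `0 < a < 1`, `1 ≤ j ≤ m` and odd `b₂ ≥ 1`, the contour integral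
`(1/(2πi)) ∮ (1+a²) w^{−1+j−2m} (w−a)^{−(3+b₂)/2} (1+aw)^{(b₂−1)/2} dw` over a positively
oriented circle of radius `R` with `a < R < 1/a` (enclosing `0` and `a` but not `−1/a`)
equals `0`, since the integrand has no pole at `−1/a` or at infinity. -/
theorem stmt18 (a R : ℝ) (ha0 : 0 < a) (ha1 : a < 1) (hR1 : a < R) (hR2 : R < 1 / a)
    (m : ℕ) (j : ℤ) (hj1 : 1 ≤ j) (hj2 : j ≤ (m : ℤ))
    (b2 : ℤ) (hb2 : 1 ≤ b2) (hodd : Odd b2) :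
    (2 * Real.pi * I)⁻¹ * (∮ w in C(0, R),
        ((1 + a ^ 2 : ℝ) : ℂ) * w ^ (-1 + j - 2 * (m : ℤ))
          * (w - (a : ℂ)) ^ (-((3 + b2) / 2)) * (1 + (a : ℂ) * w) ^ ((b2 - 1) / 2))
      = 0 := by
  obtain ⟨k, hk⟩ := hodd
  have hk0 : 0 ≤ k := by omega
  set p : ℤ := -1 + j - 2 * (m : ℤ) with hp
  have hple : p ≤ -1 := by omega
  have hq : -((3 + b2) / 2) = -(k + 2) := by omega
  have hr : (b2 - 1) / 2 = k := by omega
  set f : ℂ → ℂ := fun w => ((1 + a ^ 2 : ℝ) : ℂ) * w ^ p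
    * (w - (a : ℂ)) ^ (-(k + 2)) * (1 + (a : ℂ) * w) ^ k with hf
  rw [hq, hr]
  suffices h : (∮ w in C(0, R), f w) = 0 by rw [show (∮ w in C(0,R),
      ((1 + a ^ 2 : ℝ) : ℂ) * w ^ p * (w - (a : ℂ)) ^ (-(k + 2))
      * (1 + (a : ℂ) * w) ^ k) = 0 from h, mul_zero]
  -- differentiability of f away from 0 and a
  have hdiff : ∀ z : ℂ, z ≠ 0 → z ≠ (a : ℂ) → DifferentiableAt ℂ f z := by
    intro z hz0 hza
    apply DifferentiableAt.mul
    apply DifferentiableAt.mul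
    · exact (differentiableAt_const _).mul (differentiableAt_zpow.mpr (Or.inl hz0))
    · exact (differentiableAt_id.sub_const _).zpow (Or.inl (sub_ne_zero.mpr hza))
    · exact ((differentiableAt_const _).add ((differentiableAt_const _).mul
        differentiableAt_id)).zpow (Or.inr hk0)
  have hR0 : 0 < R := ha0.trans hR1
  have hne : ∀ z : ℂ, R ≤ ‖z‖ → z ≠ 0 ∧ z ≠ (a : ℂ) := by
    intro z hz
    constructor
    · intro h; rw [h] at hz; simp at hz; linarith
    · intro h; rw [h] at hz
      rw [Complex.norm_real, Real.norm_eq_abs, abs_of_pos ha0] at hz; linarith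
  -- the integral is independent of the radius (≥ R)
  have hconst : ∀ R' : ℝ, R ≤ R' → (∮ w in C(0, R'), f w) = (∮ w in C(0, R), f w) := by
    intro R' hR'
    apply Complex.circleIntegral_eq_of_differentiable_on_annulus_off_countable hR0 hR'
      (Set.countable_empty) (s := ∅)
    · intro z hz
      have hz2 : R ≤ ‖z‖ := by
        have := hz.2
        simp only [mem_ball, dist_zero_right, not_lt] at this
        exact this
      obtain ⟨hz0, hza⟩ := hne z hz2
      exact (hdiff z hz0 hza).continuousAt.continuousWithinAt
    · intro z hz
      have hz2 : R ≤ ‖z‖ := by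
        have := hz.1.2
        simp only [mem_closedBall, dist_zero_right, not_le] at this
        linarith
      obtain ⟨hz0, hza⟩ := hne z hz2
      exact hdiff z hz0 hza
  -- constant for the bound
  set C0 : ℝ := (1 + a ^ 2) * 2 ^ (k + 2) * (2 * a) ^ k with hC0
  have hC0pos : 0 < C0 := by
    apply mul_pos (mul_pos (by positivity) (zpow_pos two_pos _))
    exact zpow_pos (by linarith) _
  set R0 : ℝ := max (max R 1) (max (2 * a) (1 / a)) with hR0def
  -- bound on the integral over a large circle
  have hbound : ∀ R' : ℝ, R0 ≤ R' →
      ‖∮ w in C(0, R), f w‖ ≤ 2 * Real.pi * C0 * R' ^ (-2 : ℤ) := by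
    intro R' hR'
    have hRR' : R ≤ R' := le_trans (le_trans (le_max_left _ _) (le_max_left _ _)) hR'
    have h1R' : 1 ≤ R' := le_trans (le_trans (le_max_right _ _) (le_max_left _ _)) hR'
    have h2a : 2 * a ≤ R' := le_trans (le_trans (le_max_left _ _) (le_max_right _ _)) hR'
    have hinva : 1 / a ≤ R' := le_trans (le_trans (le_max_right _ _) (le_max_right _ _)) hR'
    have hR'pos : 0 < R' := by linarith
    rw [← hconst R' hRR']
    have key : ∀ z ∈ sphere (0:ℂ) R', ‖f z‖ ≤ C0 * R' ^ (p - 2) := by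
      intro z hz
      have habs : ‖z‖ = R' := by
        simpa [Complex.dist_eq] using hz
      have hnz : ‖z‖ = R' := habs
      have hza : R' / 2 ≤ ‖z - (a : ℂ)‖ := by
        have := norm_sub_norm_le z ((a : ℂ))
        rw [hnz, Complex.norm_real, Real.norm_eq_abs, abs_of_pos ha0] at this
        linarith
      have hzap : 0 < R' / 2 := by linarith
      have h1az : ‖1 + (a : ℂ) * z‖ ≤ 2 * a * R' := by
        have h1 : ‖1 + (a : ℂ) * z‖ ≤ 1 + a * R' := by
          calc ‖1 + (a : ℂ) * z‖ ≤ ‖(1 : ℂ)‖ + ‖(a : ℂ) * z‖ := norm_add_le _ _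
          _ = 1 + a * R' := by
            rw [norm_one, norm_mul, hnz, Complex.norm_real, Real.norm_eq_abs, abs_of_pos ha0]
        have h2 : 1 ≤ a * R' := by
          rw [div_le_iff₀ ha0] at hinva
          linarith
        linarith
      have hnorm : ‖f z‖ = (1 + a ^ 2) * R' ^ p * ‖z - (a:ℂ)‖ ^ (-(k + 2))
          * ‖1 + (a : ℂ) * z‖ ^ k := by
        simp only [hf, norm_mul, norm_zpow, hnz, Complex.norm_real, Real.norm_eq_abs]
        rw [abs_of_pos (by positivity : (0:ℝ) < 1 + a ^ 2)]
      rw [hnorm]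
      calc (1 + a ^ 2) * R' ^ p * ‖z - (a:ℂ)‖ ^ (-(k + 2)) * ‖1 + (a : ℂ) * z‖ ^ k
          ≤ (1 + a ^ 2) * R' ^ p * (R' / 2) ^ (-(k + 2)) * (2 * a * R') ^ k := by
            apply mul_le_mul
            · apply mul_le_mul_of_nonneg_left (zpow_anti_base' hzap hza (by omega))
              positivity
            · exact zpow_mono_base' (norm_nonneg _) h1az hk0
            · exact zpow_nonneg (norm_nonneg _) _
            · have : (0:ℝ) < (R'/2) ^ (-(k+2)) := zpow_pos hzap _
              have : (0:ℝ) < R' ^ p := zpow_pos hR'pos _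
              positivity
        _ = C0 * R' ^ (p - 2) := by
            have hR'ne : R' ≠ 0 := ne_of_gt hR'pos
            have hhalf : (R' / 2 : ℝ) ^ (-(k + 2)) = 2 ^ (k + 2) * R' ^ (-(k + 2)) := by
              rw [zpow_neg, div_zpow, inv_div, div_eq_mul_inv, ← zpow_neg]
            rw [hhalf, mul_zpow, hC0,
              show p - 2 = p + -(k + 2) + k from by ring,
              zpow_add₀ hR'ne, zpow_add₀ hR'ne]
            ring
    have := circleIntegral.norm_integral_le_of_norm_le_const hR'pos.le key
    calc ‖∮ w in C(0, R'), f w‖ ≤ 2 * Real.pi * R' * (C0 * R' ^ (p - 2)) := this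
      _ = 2 * Real.pi * C0 * R' ^ (p - 1) := by
          rw [show p - 1 = 1 + (p - 2) from by ring, zpow_add₀ (ne_of_gt hR'pos), zpow_one]
          ring
      _ ≤ 2 * Real.pi * C0 * R' ^ (-2 : ℤ) := by
          apply mul_le_mul_of_nonneg_left (zpow_le_zpow_right₀ h1R' (by omega))
          positivity
  -- conclude by letting R' → ∞
  have htend : Tendsto (fun R' : ℝ => 2 * Real.pi * C0 * R' ^ (-2 : ℤ)) atTop (nhds 0) := by
    exact tendsto_const_mul_zpow_atTop_zero (show (-2:ℤ) < 0 by norm_num)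
  have hle : ‖∮ w in C(0, R), f w‖ ≤ 0 :=
    ge_of_tendsto htend (eventually_atTop.2 ⟨R0, hbound⟩)
  simpa using norm_le_zero_iff.mp hle
end
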